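/- arXiv:1901.03794 — 2 statements merged into one kernel-verified Lean document; each statement's English description precedes it below -/
import Mathlib

section
/- Let a > λ > 0, T > t₀ ≥ 0, x₀ ∈ ℝ, and suppose T − t₀ ≤ ρ where ρ = (1/λ)ln(a/(a−λ)). Define x̄(t) = x₀ − a(t − t₀) and, for any measurable u : [t₀,T] → [−1,1] with corresponding trajectory x(t) = x₀ − a∫_{t₀}^t u(s)ds, define J(x,u) = ∫_{t₀}^{T} −e^{−λt}(x(t) + u(t)) dt. Then J(x̄, 1) ≤ J(x, u), where 1 denotes the constant control u ≡ 1, with equality only if u = 1 almost everywhere. -/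
open Real MeasureTheory intervalIntegral

lemma exp_int_aux (lam : ℝ) (hl : 0 < lam) (s T : ℝ) :
    ∫ t in s..T, Real.exp (-lam * t) = (Real.exp (-lam * s) - Real.exp (-lam * T)) / lam := by
  have hderiv : ∀ t ∈ Set.uIcc s T,
      HasDerivAt (fun t => -Real.exp (-lam * t) / lam) (Real.exp (-lam * t)) t := by
    intro t _
    have h1 : HasDerivAt (fun t : ℝ => -lam * t) (-lam) t := by
      simpa using (hasDerivAt_id t).const_mul (-lam)
    have h2 : HasDerivAt (fun t => -Real.exp (-lam * t) / lam) (-(Real.exp (-lam * t) * -lam) / lam) t :=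
      (h1.exp).neg.div_const lam
    convert h2 using 1
    field_simp
  rw [intervalIntegral.integral_eq_sub_of_hasDerivAt hderiv
    ((Real.continuous_exp.comp (continuous_const.mul continuous_id)).intervalIntegrable s T)]
  ring

lemma fubini_aux (t₀ T lam : ℝ) (hl : 0 < lam) (ht₀ : 0 ≤ t₀) (hT : t₀ < T)
    (v : ℝ → ℝ) (hv_int : IntervalIntegrable v volume t₀ T)
    (hvb : ∀ s ∈ Set.Icc t₀ T, |v s| ≤ 2) :
    ∫ t in t₀..T, Real.exp (-lam * t) * (∫ s in t₀..t, v s) =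
      ∫ s in t₀..T, ((Real.exp (-lam * s) - Real.exp (-lam * T)) / lam) * v s := by
  set E : ℝ → ℝ := fun t => Real.exp (-lam * t) with hE_def
  have hEc : Continuous E := Real.continuous_exp.comp (continuous_const.mul continuous_id)
  set μ : Measure ℝ := volume.restrict (Set.Ioc t₀ T) with hμ_def
  haveI : IsFiniteMeasure μ := by
    constructor
    rw [hμ_def, Measure.restrict_apply_univ]
    simp [Real.volume_Ioc]
  have hvae : AEMeasurable v μ := hv_int.1.1.aemeasurable
  set f : ℝ → ℝ → ℝ := fun t s => E t * Set.indicator (Set.Ioc t₀ t) v s with hf_def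
  have hS : MeasurableSet {p : ℝ × ℝ | t₀ < p.2 ∧ p.2 ≤ p.1} :=
    (measurableSet_lt measurable_const measurable_snd).inter
      (measurableSet_le measurable_snd measurable_fst)
  have hrw : Function.uncurry f = fun p : ℝ × ℝ =>
      E p.1 * Set.indicator {q : ℝ × ℝ | t₀ < q.2 ∧ q.2 ≤ q.1} (fun q => v q.2) p := by
    ext p
    by_cases h : t₀ < p.2 ∧ p.2 ≤ p.1 <;>
      simp [hf_def, Function.uncurry, Set.indicator_apply, Set.mem_Ioc, h]
  have hmeas : AEStronglyMeasurable (Function.uncurry f) (μ.prod μ) := by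
    rw [hrw]
    exact ((hEc.comp continuous_fst).aemeasurable.mul
      ((hvae.comp_snd).indicator hS)).aestronglyMeasurable
  have hae_mem : ∀ᵐ p : ℝ × ℝ ∂(μ.prod μ), p ∈ (Set.Ioc t₀ T) ×ˢ (Set.Ioc t₀ T) := by
    rw [hμ_def, Measure.prod_restrict]
    exact ae_restrict_mem (measurableSet_Ioc.prod measurableSet_Ioc)
  have hint : Integrable (Function.uncurry f) (μ.prod μ) := by
    refine Integrable.mono' (integrable_const 2) hmeas ?_
    filter_upwards [hae_mem] with p hp
    have h1 : E p.1 ≤ 1 := by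
      rw [hE_def]
      rw [Real.exp_le_one_iff]
      nlinarith [hp.1.1]
    have h2 : ‖Set.indicator (Set.Ioc t₀ p.1) v p.2‖ ≤ 2 := by
      refine le_trans (norm_indicator_le_norm_self _ _) ?_
      simpa using hvb p.2 (Set.Ioc_subset_Icc_self hp.2)
    have h3 : 0 < E p.1 := Real.exp_pos _
    calc ‖f p.1 p.2‖ = E p.1 * ‖Set.indicator (Set.Ioc t₀ p.1) v p.2‖ := by
          rw [hf_def]; simp [abs_mul, abs_of_pos h3]
      _ ≤ 1 * 2 := by
          apply mul_le_mul h1 h2 (norm_nonneg _) zero_le_one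
      _ = 2 := one_mul 2
  have swap := MeasureTheory.integral_integral_swap hint
  have hLHS : ∫ t, (∫ s, f t s ∂μ) ∂μ = ∫ t in t₀..T, E t * (∫ s in t₀..t, v s) := by
    rw [intervalIntegral.integral_of_le hT.le]
    apply MeasureTheory.integral_congr_ae
    filter_upwards [ae_restrict_mem measurableSet_Ioc] with t ht
    have : ∫ s, Set.indicator (Set.Ioc t₀ t) v s ∂μ = ∫ s in t₀..t, v s := by
      rw [MeasureTheory.integral_indicator measurableSet_Ioc, hμ_def,
        Measure.restrict_restrict measurableSet_Ioc, Set.Ioc_inter_Ioc,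
        intervalIntegral.integral_of_le ht.1.le]
      congr 2
      simp [min_eq_left ht.2]
    rw [hf_def]
    simp only
    rw [MeasureTheory.integral_const_mul, this]
  have hRHS : ∫ s, (∫ t, f t s ∂μ) ∂μ =
      ∫ s in t₀..T, ((E s - E T) / lam) * v s := by
    rw [intervalIntegral.integral_of_le hT.le]
    apply MeasureTheory.integral_congr_ae
    filter_upwards [ae_restrict_mem measurableSet_Ioc] with s hs
    have heq : (fun t => f t s) = Set.indicator (Set.Ici s) (fun t => E t * v s) := by
      ext t
      by_cases h : s ≤ t
      · have hmem : s ∈ Set.Ioc t₀ t := ⟨hs.1, h⟩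
        show E t * (Set.Ioc t₀ t).indicator v s = _
        rw [Set.indicator_of_mem hmem, Set.indicator_of_mem (Set.mem_Ici.mpr h)]
      · have hmem : s ∉ Set.Ioc t₀ t := by
          simp only [Set.mem_Ioc, not_and]; intro _; linarith
        show E t * (Set.Ioc t₀ t).indicator v s = _
        rw [Set.indicator_of_notMem hmem,
          Set.indicator_of_notMem (by simpa using h), mul_zero]
    rw [heq, MeasureTheory.integral_indicator measurableSet_Ici, hμ_def,
      Measure.restrict_restrict measurableSet_Ici]
    have hset : Set.Ici s ∩ Set.Ioc t₀ T = Set.Icc s T := by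
      ext t
      simp only [Set.mem_inter_iff, Set.mem_Ici, Set.mem_Ioc, Set.mem_Icc]
      constructor
      · rintro ⟨h1, _, h3⟩; exact ⟨h1, h3⟩
      · rintro ⟨h1, h2⟩; exact ⟨h1, lt_of_lt_of_le hs.1 h1, h2⟩
    rw [hset, integral_Icc_eq_integral_Ioc, ← intervalIntegral.integral_of_le hs.2,
      intervalIntegral.integral_mul_const, exp_int_aux lam hl s T]
  rw [← hLHS, swap, hRHS]

theorem stmt_8 (a lam t₀ T x₀ : ℝ) (hl : 0 < lam) (ha : lam < a)
    (ht₀ : 0 ≤ t₀) (hT : t₀ < T)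
    (hρ : T - t₀ ≤ (1 / lam) * Real.log (a / (a - lam)))
    (u : ℝ → ℝ)
    (hu_int : IntervalIntegrable u volume t₀ T)
    (hu_mem : ∀ t ∈ Set.Icc t₀ T, u t ∈ Set.Icc (-1 : ℝ) 1)
    (x xbar : ℝ → ℝ)
    (hx : ∀ t, x t = x₀ - a * ∫ s in t₀..t, u s)
    (hxbar : ∀ t, xbar t = x₀ - a * (t - t₀)) :
    (∫ t in t₀..T, -exp (-lam * t) * (xbar t + 1)) ≤
      (∫ t in t₀..T, -exp (-lam * t) * (x t + u t)) ∧
    ((∫ t in t₀..T, -exp (-lam * t) * (xbar t + 1)) =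
        (∫ t in t₀..T, -exp (-lam * t) * (x t + u t)) →
      ∀ᵐ t ∂(volume.restrict (Set.Ioc t₀ T)), u t = 1) := by
  have hEc : Continuous fun t => Real.exp (-lam * t) :=
    Real.continuous_exp.comp (continuous_const.mul continuous_id)
  set v : ℝ → ℝ := fun s => 1 - u s with hv_def
  have hv_int : IntervalIntegrable v volume t₀ T := intervalIntegrable_const.sub hu_int
  have hv0 : ∀ s ∈ Set.Icc t₀ T, 0 ≤ v s := by
    intro s hs
    have := (hu_mem s hs).2
    simp only [hv_def]; linarith
  have hvb : ∀ s ∈ Set.Icc t₀ T, |v s| ≤ 2 := by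
    intro s hs
    have h1 := (hu_mem s hs).1
    have h2 := (hu_mem s hs).2
    rw [abs_le]
    constructor <;> simp only [hv_def] <;> linarith
  set g : ℝ → ℝ := fun s => (Real.exp (-lam * s) - Real.exp (-lam * T)) / lam with hg_def
  have hgc : Continuous g := (hEc.sub continuous_const).div_const lam
  set φ : ℝ → ℝ := fun t => Real.exp (-lam * t) - a * g t with hφ_def
  have hφc : Continuous φ := hEc.sub (continuous_const.mul hgc)
  set V : ℝ → ℝ := fun t => ∫ s in t₀..t, v s with hV_def
  have hVc : ContinuousOn V (Set.uIcc t₀ T) := by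
    apply intervalIntegral.continuousOn_primitive_interval
    rw [Set.uIcc_of_le hT.le]
    exact (integrableOn_Icc_iff_integrableOn_Ioc).mpr hv_int.1
  -- integrability facts
  have hEV : IntervalIntegrable (fun t => Real.exp (-lam * t) * V t) volume t₀ T :=
    (hEc.continuousOn.mul hVc).intervalIntegrable
  have hEv : IntervalIntegrable (fun t => Real.exp (-lam * t) * v t) volume t₀ T :=
    hv_int.continuousOn_mul hEc.continuousOn
  have hgv : IntervalIntegrable (fun t => g t * v t) volume t₀ T :=
    hv_int.continuousOn_mul hgc.continuousOn
  have hφv : IntervalIntegrable (fun t => φ t * v t) volume t₀ T :=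
    hv_int.continuousOn_mul hφc.continuousOn
  have hxbc : Continuous xbar := by
    have : xbar = fun t => x₀ - a * (t - t₀) := funext hxbar
    rw [this]; fun_prop
  have hbar : IntervalIntegrable (fun t => -Real.exp (-lam * t) * (xbar t + 1)) volume t₀ T :=
    (hEc.neg.mul (hxbc.add continuous_const)).intervalIntegrable _ _
  -- pointwise identity
  have hpt : ∀ t ∈ Set.uIcc t₀ T, -Real.exp (-lam * t) * (x t + u t)
      = -Real.exp (-lam * t) * (xbar t + 1)
        + (Real.exp (-lam * t) * v t - a * (Real.exp (-lam * t) * V t)) := by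
    intro t ht
    have hsub : Set.uIcc t₀ t ⊆ Set.uIcc t₀ T := Set.uIcc_subset_uIcc Set.left_mem_uIcc ht
    have h1 : IntervalIntegrable v volume t₀ t := hv_int.mono_set hsub
    have h2 : ∫ s in t₀..t, u s = (t - t₀) - V t := by
      have heqon : Set.EqOn u (fun s => 1 - v s) (Set.uIcc t₀ t) := by
        intro s _; simp [hv_def]
      rw [intervalIntegral.integral_congr heqon,
        intervalIntegral.integral_sub (intervalIntegrable_const) h1,
        intervalIntegral.integral_const]
      simp [hV_def, smul_eq_mul]
    rw [hx t, hxbar t, h2]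
    simp only [hv_def]
    ring
  -- Fubini
  have hfub : ∫ t in t₀..T, Real.exp (-lam * t) * V t = ∫ s in t₀..T, g s * v s := by
    simpa only [hV_def, hg_def] using fubini_aux t₀ T lam hl ht₀ hT v hv_int hvb
  -- key identity
  have key : (∫ t in t₀..T, -Real.exp (-lam * t) * (x t + u t))
      = (∫ t in t₀..T, -Real.exp (-lam * t) * (xbar t + 1)) + ∫ t in t₀..T, φ t * v t := by
    rw [intervalIntegral.integral_congr hpt,
      intervalIntegral.integral_add hbar (hEv.sub (hEV.const_mul a))]
    congr 1
    rw [intervalIntegral.integral_sub hEv (hEV.const_mul a),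
      intervalIntegral.integral_const_mul, hfub,
      ← intervalIntegral.integral_const_mul,
      ← intervalIntegral.integral_sub hEv (hgv.const_mul a)]
    apply intervalIntegral.integral_congr
    intro t _
    simp only [hφ_def]
    ring
  -- positivity facts for φ
  have hd : 0 < a - lam := by linarith
  have hkey : (a - lam) * Real.exp (-lam * t₀) ≤ a * Real.exp (-lam * T) := by
    have hlog : lam * (T - t₀) ≤ Real.log (a / (a - lam)) := by
      calc lam * (T - t₀) ≤ lam * ((1 / lam) * Real.log (a / (a - lam))) :=
            mul_le_mul_of_nonneg_left hρ hl.le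
        _ = Real.log (a / (a - lam)) := by field_simp
    have hexp : Real.exp (lam * (T - t₀)) ≤ a / (a - lam) := by
      rw [← Real.exp_log (div_pos (by linarith) hd)]
      exact Real.exp_le_exp.mpr hlog
    have h3 : Real.exp (lam * (T - t₀)) * (a - lam) ≤ a := (le_div_iff₀ hd).mp hexp
    have h4 : Real.exp (lam * (T - t₀)) * Real.exp (-lam * T) = Real.exp (-lam * t₀) := by
      rw [← Real.exp_add]; congr 1; ring
    calc (a - lam) * Real.exp (-lam * t₀)
        = Real.exp (lam * (T - t₀)) * (a - lam) * Real.exp (-lam * T) := by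
          rw [← h4]; ring
      _ ≤ a * Real.exp (-lam * T) :=
          mul_le_mul_of_nonneg_right h3 (Real.exp_pos _).le
  have hφdiff : ∀ t, lam * (φ t - φ t₀)
      = (Real.exp (-lam * t₀) - Real.exp (-lam * t)) * (a - lam) := by
    intro t
    simp only [hφ_def, hg_def]
    field_simp
    ring
  have hφt₀ : 0 ≤ φ t₀ := by
    have h5 : lam * φ t₀ = a * Real.exp (-lam * T) - (a - lam) * Real.exp (-lam * t₀) := by
      simp only [hφ_def, hg_def]
      field_simp
      ring
    nlinarith [hkey]
  have hφnn : ∀ t ∈ Set.Icc t₀ T, 0 ≤ φ t := by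
    intro t ht
    have hE : Real.exp (-lam * t) ≤ Real.exp (-lam * t₀) :=
      Real.exp_le_exp.mpr (by nlinarith [ht.1])
    have := hφdiff t
    nlinarith
  have hφpos : ∀ t ∈ Set.Ioc t₀ T, 0 < φ t := by
    intro t ht
    have hE : Real.exp (-lam * t) < Real.exp (-lam * t₀) :=
      Real.exp_lt_exp.mpr (by nlinarith [ht.1])
    have := hφdiff t
    nlinarith
  have hnonneg : 0 ≤ ∫ t in t₀..T, φ t * v t :=
    intervalIntegral.integral_nonneg hT.le fun s hs => mul_nonneg (hφnn s hs) (hv0 s hs)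
  constructor
  · linarith [key, hnonneg]
  · intro heq
    have hz : ∫ t in t₀..T, φ t * v t = 0 := by linarith [key]
    have h0 : (fun t => φ t * v t) =ᵐ[volume.restrict (Set.Ioc t₀ T)] 0 := by
      refine (intervalIntegral.integral_eq_zero_iff_of_le_of_nonneg_ae hT.le ?_ hφv).mp hz
      filter_upwards [ae_restrict_mem measurableSet_Ioc] with t ht
      exact mul_nonneg (hφnn t (Set.Ioc_subset_Icc_self ht)) (hv0 t (Set.Ioc_subset_Icc_self ht))
    filter_upwards [h0, ae_restrict_mem measurableSet_Ioc] with t h1 h2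
    have hp := hφpos t h2
    have hvz : v t = 0 := by
      have h1' : φ t * v t = 0 := h1
      rcases mul_eq_zero.mp h1' with h | h
      · exact absurd h (ne_of_gt hp)
      · exact h
    have : 1 - u t = 0 := hvz
    linarith
end

section
/- Let a > λ > 0, T > t₀ ≥ 0, and set t̄ = T − (1/λ)ln(a/(a−λ)). Assume t₀ < t̄. Define ū(t) = −1 for t ∈ [t₀, t̄) and ū(t) = 1 for t ∈ [t̄, T], with trajectory x̄(t) = x₀ + a(t−t₀) for t ∈ [t₀, t̄] and x̄(t) = x̄(t̄) − a(t − t̄) for t ∈ (t̄, T]. Then for every measurable control u : [t₀,T] → [−1,1] with trajectory x(t) = x₀ − a∫_{t₀}^t u(s)ds, one has ∫_{t₀}^{T} −e^{−λt}(x̄(t)+ū(t)) dt ≤ ∫_{t₀}^{T} −e^{−λt}(x(t)+u(t)) dt. -/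
open Real MeasureTheory intervalIntegral

lemma expint (lam : ℝ) (hl : lam ≠ 0) (c d : ℝ) :
    ∫ t in c..d, Real.exp (-lam * t)
      = (Real.exp (-lam * c) - Real.exp (-lam * d)) / lam := by
  have hderiv : ∀ t ∈ Set.uIcc c d,
      HasDerivAt (fun t => -Real.exp (-lam * t) / lam) (Real.exp (-lam * t)) t := by
    intro t _
    have h1 : HasDerivAt (fun t : ℝ => -lam * t) (-lam) t := by
      simpa using (hasDerivAt_id t).const_mul (-lam)
    have h2 : HasDerivAt (fun t => -Real.exp (-lam * t) / lam) (-(Real.exp (-lam * t) * -lam) / lam) t :=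
      (h1.exp).neg.div_const lam
    convert h2 using 1
    field_simp
  have hint : IntervalIntegrable (fun t => Real.exp (-lam * t)) volume c d :=
    (Real.continuous_exp.comp (continuous_const.mul continuous_id)).intervalIntegrable c d
  rw [integral_eq_sub_of_hasDerivAt hderiv hint]
  field_simp
  ring

lemma fubini_key (lam t₀ T : ℝ) (hl : 0 < lam) (hT : t₀ ≤ T)
    (v : ℝ → ℝ) (hv : IntervalIntegrable v volume t₀ T) :
    (∫ t in t₀..T, Real.exp (-lam * t) * ∫ s in t₀..t, v s)
      = ∫ s in t₀..T, ((Real.exp (-lam * s) - Real.exp (-lam * T)) / lam) * v s := by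
  set μ := volume.restrict (Set.Ioc t₀ T) with hμ
  haveI hfin : IsFiniteMeasure μ := by
    constructor
    rw [hμ, Measure.restrict_apply_univ]
    exact measure_Ioc_lt_top
  have hv1 : IntegrableOn v (Set.Ioc t₀ T) volume :=
    (intervalIntegrable_iff_integrableOn_Ioc_of_le hT).mp hv
  have hvm : AEStronglyMeasurable v μ := hv1.aestronglyMeasurable
  set f : ℝ → ℝ → ℝ := fun t s => Real.exp (-lam * t) * (if s ≤ t then v s else 0) with hf
  have hfm : AEStronglyMeasurable (Function.uncurry f) (μ.prod μ) := by
    have h1 : AEStronglyMeasurable (fun p : ℝ × ℝ => v p.2) (μ.prod μ) :=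
      hvm.comp_quasiMeasurePreserving Measure.quasiMeasurePreserving_snd
    have hs : MeasurableSet {p : ℝ × ℝ | p.2 ≤ p.1} :=
      measurableSet_le measurable_snd measurable_fst
    have h2 : AEStronglyMeasurable
        (fun p : ℝ × ℝ => if p.2 ≤ p.1 then v p.2 else 0) (μ.prod μ) := by
      have := h1.indicator hs
      convert this using 1; ext p; simp [Set.indicator_apply]
    exact ((Real.continuous_exp.comp
      (continuous_const.mul continuous_fst)).aestronglyMeasurable).mul h2
  have hbound : Integrable (fun p : ℝ × ℝ => Real.exp (-lam * p.1) * |v p.2|) (μ.prod μ) := by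
    have e1 : Integrable (fun t => Real.exp (-lam * t)) μ :=
      (Real.continuous_exp.comp (continuous_const.mul continuous_id)).integrableOn_Ioc
    have e2 : Integrable (fun s => |v s|) μ := hv1.abs
    exact e1.mul_prod e2
  have hfint : Integrable (Function.uncurry f) (μ.prod μ) := by
    apply hbound.mono' hfm
    apply Filter.Eventually.of_forall
    intro p
    simp only [Function.uncurry, hf, norm_mul, Real.norm_eq_abs, Real.abs_exp]
    have h3 : |if p.2 ≤ p.1 then v p.2 else 0| ≤ |v p.2| := by
      split <;> simp [abs_nonneg]
    exact mul_le_mul_of_nonneg_left h3 (Real.exp_pos _).le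
  have LHSeq : (∫ t in t₀..T, Real.exp (-lam * t) * ∫ s in t₀..t, v s)
      = ∫ t, (∫ s, f t s ∂μ) ∂μ := by
    rw [intervalIntegral.integral_of_le hT]
    apply setIntegral_congr_fun measurableSet_Ioc
    intro t ht
    have hins : (∫ s in t₀..t, v s) = ∫ s, (if s ≤ t then v s else 0) ∂μ := by
      rw [intervalIntegral.integral_of_le ht.1.le]
      have hinter : Set.Ioc t₀ T ∩ Set.Ioc t₀ t = Set.Ioc t₀ t :=
        Set.inter_eq_right.mpr (Set.Ioc_subset_Ioc_right ht.2)
      rw [← hinter, ← setIntegral_indicator measurableSet_Ioc]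
      apply setIntegral_congr_fun measurableSet_Ioc
      intro s hs
      simp only [Set.indicator_apply, Set.mem_Ioc]
      by_cases h' : s ≤ t
      · simp [h', hs.1]
      · simp [h']
    show Real.exp (-lam * t) * (∫ s in t₀..t, v s) = ∫ s, f t s ∂μ
    rw [hins, ← MeasureTheory.integral_const_mul]
  rw [LHSeq, integral_integral_swap hfint]
  rw [intervalIntegral.integral_of_le hT]
  apply setIntegral_congr_fun measurableSet_Ioc
  intro s hs
  have h1 : ∀ t, f t s = (Set.Ici s).indicator (fun t => Real.exp (-lam * t) * v s) t := by
    intro t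
    simp only [hf, Set.indicator_apply, Set.mem_Ici]
    by_cases h' : s ≤ t <;> simp [h']
  have hset : Set.Ioc t₀ T ∩ Set.Ici s = Set.Icc s T := by
    ext t
    simp only [Set.mem_inter_iff, Set.mem_Ioc, Set.mem_Ici, Set.mem_Icc]
    constructor
    · rintro ⟨⟨_, h2⟩, h3⟩; exact ⟨h3, h2⟩
    · rintro ⟨h1', h2⟩; exact ⟨⟨lt_of_lt_of_le hs.1 h1', h2⟩, h1'⟩
  calc (∫ t, f t s ∂μ)
      = ∫ t in Set.Ioc t₀ T, (Set.Ici s).indicator (fun t => Real.exp (-lam * t) * v s) t := by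
        rw [hμ]
        exact integral_congr_ae (Filter.Eventually.of_forall h1)
    _ = ∫ t in Set.Ioc t₀ T ∩ Set.Ici s, Real.exp (-lam * t) * v s :=
        setIntegral_indicator measurableSet_Ici
    _ = ∫ t in Set.Ioc s T, Real.exp (-lam * t) * v s := by
        rw [hset, integral_Icc_eq_integral_Ioc]
    _ = (∫ t in s..T, Real.exp (-lam * t)) * v s := by
        rw [← intervalIntegral.integral_of_le hs.2, ← intervalIntegral.integral_mul_const]
    _ = ((Real.exp (-lam * s) - Real.exp (-lam * T)) / lam) * v s := by
        rw [expint lam hl.ne' s T]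

lemma Jrep (a lam t₀ T x₀ : ℝ) (hl : 0 < lam) (hT : t₀ ≤ T)
    (v : ℝ → ℝ) (hv : IntervalIntegrable v volume t₀ T) :
    (∫ t in t₀..T, -Real.exp (-lam * t) * ((x₀ - a * ∫ s in t₀..t, v s) + v t))
      = (-x₀) * ((Real.exp (-lam * t₀) - Real.exp (-lam * T)) / lam)
        + ∫ s in t₀..T,
            (a * ((Real.exp (-lam * s) - Real.exp (-lam * T)) / lam) - Real.exp (-lam * s)) * v s := by
  have hexp : IntervalIntegrable (fun t => Real.exp (-lam * t)) volume t₀ T :=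
    (Real.continuous_exp.comp (continuous_const.mul continuous_id)).intervalIntegrable t₀ T
  have hGcont : ContinuousOn (fun t => ∫ s in t₀..t, v s) (Set.uIcc t₀ T) :=
    intervalIntegral.continuousOn_primitive_interval' hv Set.left_mem_uIcc
  have hg2 : IntervalIntegrable (fun t => Real.exp (-lam * t) * ∫ s in t₀..t, v s) volume t₀ T :=
    hexp.mul_continuousOn hGcont
  have hg3 : IntervalIntegrable (fun t => Real.exp (-lam * t) * v t) volume t₀ T :=
    hv.continuousOn_mul (Real.continuous_exp.comp
      (continuous_const.mul continuous_id)).continuousOn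
  have hsplit : (∫ t in t₀..T, -Real.exp (-lam * t) * ((x₀ - a * ∫ s in t₀..t, v s) + v t))
      = (-x₀) * (∫ t in t₀..T, Real.exp (-lam * t))
        + a * (∫ t in t₀..T, Real.exp (-lam * t) * ∫ s in t₀..t, v s)
        - ∫ t in t₀..T, Real.exp (-lam * t) * v t := by
    rw [← intervalIntegral.integral_const_mul, ← intervalIntegral.integral_const_mul,
      ← intervalIntegral.integral_add (hexp.const_mul _) (hg2.const_mul _),
      ← intervalIntegral.integral_sub (((hexp.const_mul _).add (hg2.const_mul _))) hg3]
    apply intervalIntegral.integral_congr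
    intro t _
    ring
  have hφv : IntervalIntegrable
      (fun s => a * ((Real.exp (-lam * s) - Real.exp (-lam * T)) / lam) * v s) volume t₀ T := by
    apply hv.continuousOn_mul
    apply Continuous.continuousOn
    exact (continuous_const.mul (((Real.continuous_exp.comp
      (continuous_const.mul continuous_id)).sub continuous_const).div_const lam))
  have hrhs : (∫ s in t₀..T,
        (a * ((Real.exp (-lam * s) - Real.exp (-lam * T)) / lam) - Real.exp (-lam * s)) * v s)
      = (∫ s in t₀..T, a * ((Real.exp (-lam * s) - Real.exp (-lam * T)) / lam) * v s)
        - ∫ s in t₀..T, Real.exp (-lam * s) * v s := by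
    rw [← intervalIntegral.integral_sub hφv hg3]
    apply intervalIntegral.integral_congr
    intro s _
    ring
  have hfk := fubini_key lam t₀ T hl hT v hv
  rw [hsplit, hrhs, expint lam hl.ne' t₀ T]
  have : (∫ s in t₀..T, a * ((Real.exp (-lam * s) - Real.exp (-lam * T)) / lam) * v s)
      = a * ∫ s in t₀..T, ((Real.exp (-lam * s) - Real.exp (-lam * T)) / lam) * v s := by
    rw [← intervalIntegral.integral_const_mul]
    apply intervalIntegral.integral_congr
    intro s _
    ring
  rw [this, ← hfk]
  ring

theorem stmt_9 (a lam t₀ T x₀ : ℝ) (hl : 0 < lam) (ha : lam < a)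
    (ht₀ : 0 ≤ t₀) (hT : t₀ < T)
    (tbar : ℝ) (htbar : tbar = T - (1 / lam) * Real.log (a / (a - lam)))
    (h : t₀ < tbar)
    (ubar xbar : ℝ → ℝ)
    (hubar : ∀ t, ubar t = if t < tbar then -1 else 1)
    (hxbar : ∀ t, xbar t =
      if t ≤ tbar then x₀ + a * (t - t₀) else x₀ + a * (tbar - t₀) - a * (t - tbar))
    (u x : ℝ → ℝ)
    (hu_int : IntervalIntegrable u volume t₀ T)
    (hu_mem : ∀ t ∈ Set.Icc t₀ T, u t ∈ Set.Icc (-1 : ℝ) 1)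
    (hx : ∀ t, x t = x₀ - a * ∫ s in t₀..t, u s) :
    (∫ t in t₀..T, -exp (-lam * t) * (xbar t + ubar t)) ≤
      ∫ t in t₀..T, -exp (-lam * t) * (x t + u t) := by
  have hA : 0 < a - lam := sub_pos.mpr ha
  have hfrac : 0 < a / (a - lam) := div_pos (hl.trans ha) hA
  -- the key exponential identity at the switching time
  have hexp_tbar : Real.exp (lam * (T - tbar)) = a / (a - lam) := by
    have : lam * (T - tbar) = Real.log (a / (a - lam)) := by
      rw [htbar]; field_simp; ring
    rw [this, Real.exp_log hfrac]
  have E : a * Real.exp (-lam * T) = (a - lam) * Real.exp (-lam * tbar) := by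
    have h1 : Real.exp (-lam * tbar) = Real.exp (lam * (T - tbar)) * Real.exp (-lam * T) := by
      rw [← Real.exp_add]; ring_nf
    rw [h1, hexp_tbar]
    field_simp
  -- measurability and integrability of ubar
  have hubar_meas : Measurable ubar := by
    have : ubar = fun t => if t < tbar then (-1 : ℝ) else 1 := funext hubar
    rw [this]
    exact Measurable.ite measurableSet_Iio measurable_const measurable_const
  have hubar_int : ∀ c d : ℝ, IntervalIntegrable ubar volume c d := by
    intro c d
    rw [intervalIntegrable_iff]
    apply Integrable.mono'
      (integrableOn_const (C := (1 : ℝ))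
        (by rw [Set.uIoc]; exact measure_Ioc_lt_top.ne))
      hubar_meas.aestronglyMeasurable
    apply Filter.Eventually.of_forall
    intro t
    rw [hubar t]
    split <;> simp
  -- the primitive of ubar
  have hGubar : ∀ t ∈ Set.Icc t₀ T,
      (∫ s in t₀..t, ubar s) = if t ≤ tbar then -(t - t₀) else -(tbar - t₀) + (t - tbar) := by
    intro t ht
    have hne : ∀ᵐ s : ℝ, s ≠ tbar := by
      rw [ae_iff]
      have hset : {s : ℝ | ¬ s ≠ tbar} = {tbar} := by ext s; simp
      rw [hset]
      exact measure_singleton tbar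
    by_cases hcase : t ≤ tbar
    · rw [if_pos hcase]
      have : (∫ s in t₀..t, ubar s) = ∫ s in t₀..t, (-1 : ℝ) := by
        apply intervalIntegral.integral_congr_ae
        filter_upwards [hne] with s hs hmem
        rw [Set.uIoc_of_le ht.1] at hmem
        rw [hubar s, if_pos (lt_of_le_of_ne (hmem.2.trans hcase) hs)]
      rw [this]
      simp [smul_eq_mul]
    · push_neg at hcase
      rw [if_neg (not_le.mpr hcase)]
      have hsplit : (∫ s in t₀..t, ubar s)
          = (∫ s in t₀..tbar, ubar s) + ∫ s in tbar..t, ubar s :=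
        (intervalIntegral.integral_add_adjacent_intervals (hubar_int t₀ tbar)
          (hubar_int tbar t)).symm
      have h1 : (∫ s in t₀..tbar, ubar s) = -(tbar - t₀) := by
        have : (∫ s in t₀..tbar, ubar s) = ∫ s in t₀..tbar, (-1 : ℝ) := by
          apply intervalIntegral.integral_congr_ae
          filter_upwards [hne] with s hs hmem
          rw [Set.uIoc_of_le h.le] at hmem
          rw [hubar s, if_pos (lt_of_le_of_ne hmem.2 hs)]
        rw [this]; simp [smul_eq_mul]
      have h2 : (∫ s in tbar..t, ubar s) = t - tbar := by
        have : (∫ s in tbar..t, ubar s) = ∫ s in tbar..t, (1 : ℝ) := by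
          apply intervalIntegral.integral_congr
          intro s hs
          rw [Set.uIcc_of_le hcase.le] at hs
          rw [hubar s, if_neg (not_lt.mpr hs.1)]
        rw [this]; simp [smul_eq_mul]
      rw [hsplit, h1, h2]
  -- the optimal trajectory satisfies the dynamics
  have hxbar_eq : ∀ t ∈ Set.Icc t₀ T, xbar t = x₀ - a * ∫ s in t₀..t, ubar s := by
    intro t ht
    rw [hxbar t, hGubar t ht]
    by_cases hcase : t ≤ tbar
    · rw [if_pos hcase, if_pos hcase]; ring
    · rw [if_neg hcase, if_neg hcase]; ring
  -- rewrite both sides via the representation lemma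
  have hLHS : (∫ t in t₀..T, -exp (-lam * t) * (xbar t + ubar t))
      = ∫ t in t₀..T, -Real.exp (-lam * t) * ((x₀ - a * ∫ s in t₀..t, ubar s) + ubar t) := by
    apply intervalIntegral.integral_congr
    intro t ht
    rw [Set.uIcc_of_le hT.le] at ht
    show -Real.exp (-lam * t) * (xbar t + ubar t) = _
    rw [hxbar_eq t ht]
  have hRHS : (∫ t in t₀..T, -exp (-lam * t) * (x t + u t))
      = ∫ t in t₀..T, -Real.exp (-lam * t) * ((x₀ - a * ∫ s in t₀..t, u s) + u t) := by
    apply intervalIntegral.integral_congr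
    intro t _
    show -Real.exp (-lam * t) * (x t + u t) = _
    rw [hx t]
  rw [hLHS, hRHS, Jrep a lam t₀ T x₀ hl hT.le ubar (hubar_int t₀ T),
    Jrep a lam t₀ T x₀ hl hT.le u hu_int]
  apply add_le_add_right
  -- monotonicity of the reduced functional
  set φ : ℝ → ℝ :=
    fun s => a * ((Real.exp (-lam * s) - Real.exp (-lam * T)) / lam) - Real.exp (-lam * s) with hφdef
  have hφcont : Continuous φ := by
    rw [hφdef]
    exact (continuous_const.mul (((Real.continuous_exp.comp
      (continuous_const.mul continuous_id)).sub continuous_const).div_const lam)).sub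
      (Real.continuous_exp.comp (continuous_const.mul continuous_id))
  have hφ_form : ∀ s, φ s = (a - lam) * (Real.exp (-lam * s) - Real.exp (-lam * tbar)) / lam := by
    intro s
    rw [hφdef]
    field_simp
    ring_nf
    ring_nf at E
    linear_combination -E
  apply intervalIntegral.integral_mono_on hT.le
    ((hubar_int t₀ T).continuousOn_mul hφcont.continuousOn)
    (hu_int.continuousOn_mul hφcont.continuousOn)
  intro s hs
  rw [hubar s]
  by_cases hcase : s < tbar
  · rw [if_pos hcase]
    have hφpos : 0 ≤ φ s := by
      rw [hφ_form s]
      apply div_nonneg _ hl.le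
      apply mul_nonneg hA.le
      rw [sub_nonneg, Real.exp_le_exp]
      nlinarith
    have := (hu_mem s hs).1
    exact mul_le_mul_of_nonneg_left this hφpos
  · push_neg at hcase
    rw [if_neg (not_lt.mpr hcase)]
    have hφneg : φ s ≤ 0 := by
      rw [hφ_form s]
      apply div_nonpos_of_nonpos_of_nonneg _ hl.le
      apply mul_nonpos_of_nonneg_of_nonpos hA.le
      rw [sub_nonpos, Real.exp_le_exp]
      nlinarith
    have := (hu_mem s hs).2
    exact mul_le_mul_of_nonpos_left this hφneg
end
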